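/- Let X_1, …, X_n be a Markov chain with finite state spaces S_1, …, S_n, initial distribution π on S_1 and transition matrices P_1, …, P_{n−1}, in the sense that the law of (X_1,…,X_n) on S_1×⋯×S_n assigns to (s_1,…,s_n) the probability π(s_1)·∏_{i=1}^{n−1}(P_i)_{s_i,s_{i+1}}. Then for all 1 ≤ j and k ≥ 1 with j + k ≤ n, φ(σ(X_i, i ≤ j), σ(X_i, i ≥ j+k)) ≤ τ(P_j·P_{j+1}·⋯·P_{j+k−1}). -/

import Mathlib

/-!
Cylinder sets fixing the coordinates `1, …, n` cover `Ω` and their masses, given by the law,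
sum to one; so `μ(A ∩ B)`, `μ(B)` and `μ(A)` are sums of path weights over trajectories. Splitting
a trajectory at the times `j` and `j + k`, the Markov factorisation writes `μ(A ∩ B) / μ(B)`
and `μ(A)` as two averages, with different weights on the state at time `j`, of the same
function `g t = ∑ u, (P_j ⋯ P_{j+k-1}) t u * h u`, where `h u ∈ [0, 1]` is the probability of
`A` given the state `u` at time `j + k`. Two values of `g` differ by at most
`τ(P_j ⋯ P_{j+k-1})`, hence so do any two of its averages.
-/

open MeasureTheory
open scoped BigOperators Classical

/-- A stochastic matrix: nonnegative entries, each row sums to 1. -/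
def IsStochastic {T S : Type} [Fintype S] (P : T → S → ℝ) : Prop :=
  (∀ t s, 0 ≤ P t s) ∧ ∀ t, ∑ s : S, P t s = 1

/-- The contraction (Dobrushin) coefficient of a matrix:
`τ(P) = (1/2)·max_{t₁,t₂} Σ_s |P t₁ s − P t₂ s|`. -/
noncomputable def contractionCoeff {T S : Type} [Fintype T] [Fintype S]
    (P : T → S → ℝ) : ℝ :=
  (1 / 2) * ⨆ t₁ : T, ⨆ t₂ : T, ∑ s : S, |P t₁ s - P t₂ s|

/-- `matProd P j k` is the product `P_j · P_{j+1} · ⋯ · P_{j+k−1}` of `k` consecutive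
transition matrices (the identity matrix if `k = 0`). -/
noncomputable def matProd {S : ℕ → Type} [∀ i, Fintype (S i)]
    (P : (i : ℕ) → S i → S (i + 1) → ℝ) (j : ℕ) : (k : ℕ) → S j → S (j + k) → ℝ
  | 0 => fun t s => if t = s then 1 else 0
  | k + 1 => fun t u => ∑ s : S (j + k), matProd P j k t s * P (j + k) s u

open Finset

section Chain

variable {S : ℕ → Type} (P : (i : ℕ) → S i → S (i + 1) → ℝ)

lemma piecewise_Icc_apply_of_le {c a i : ℕ} (σ τ : ∀ i, S i) (hca : c ≤ a) (hi : a ≤ i) :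
    (Icc c a).piecewise σ τ i = Function.update τ a (σ a) i := by
  rcases hi.eq_or_lt with rfl | hi
  · simp [hca]
  · rw [Finset.piecewise_eq_of_notMem _ _ _ (by simp; omega), Function.update_of_ne (by omega)]

lemma update_piecewise_Ioc_apply_of_le {a b i : ℕ} (σ τ : ∀ i, S i) (t : S a) (hai : a ≤ i)
    (hib : i ≤ b) :
    Function.update ((Ioc a b).piecewise σ τ) a t i = Function.update σ a t i := by
  rcases hai.eq_or_lt with rfl | hai
  · simp
  · rw [Function.update_of_ne hai.ne', Function.update_of_ne hai.ne',
      Finset.piecewise_eq_of_mem _ _ _ (by simp; omega)]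

lemma update_piecewise_Ioc_apply_of_ge {a b i : ℕ} (σ τ : ∀ i, S i) (t : S a) (hab : a ≤ b)
    (hbi : b ≤ i) :
    Function.update ((Ioc a b).piecewise σ τ) a t i =
      Function.update τ b (Function.update σ a t b) i := by
  rcases hbi.eq_or_lt with rfl | hbi
  · rw [Function.update_self, update_piecewise_Ioc_apply_of_le σ τ t hab le_rfl]
  · rw [Function.update_of_ne (by omega), Function.update_of_ne hbi.ne',
      Finset.piecewise_eq_of_notMem _ _ _ (by simp; omega)]

def chainProd (a b : ℕ) (σ : ∀ i, S i) : ℝ :=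
  ∏ i ∈ Ico a b, P i (σ i) (σ (i + 1))

def pathWeight (π : S 1 → ℝ) (n : ℕ) (σ : ∀ i, S i) : ℝ :=
  π (σ 1) * chainProd P 1 n σ

lemma chainProd_congr {a b : ℕ} {σ τ : ∀ i, S i} (h : ∀ i, a ≤ i → i ≤ b → σ i = τ i) :
    chainProd P a b σ = chainProd P a b τ :=
  Finset.prod_congr rfl fun i hi => by
    obtain ⟨h1, h2⟩ := Finset.mem_Ico.mp hi
    rw [h i h1 h2.le, h (i + 1) (by omega) h2]

lemma chainProd_mul {a b c : ℕ} (hab : a ≤ b) (hbc : b ≤ c) (σ : ∀ i, S i) :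
    chainProd P a b σ * chainProd P b c σ = chainProd P a c σ :=
  Finset.prod_Ico_consecutive _ hab hbc

lemma chainProd_succ_self (a : ℕ) (σ : ∀ i, S i) :
    chainProd P a (a + 1) σ = P a (σ a) (σ (a + 1)) := by
  simp [chainProd]

lemma chainProd_nonneg (hP : ∀ i s t, 0 ≤ P i s t) (a b : ℕ) (σ : ∀ i, S i) :
    0 ≤ chainProd P a b σ :=
  Finset.prod_nonneg fun i _ => hP i _ _

lemma pathWeight_nonneg {π : S 1 → ℝ} (hπ : ∀ s, 0 ≤ π s) (hP : ∀ i s t, 0 ≤ P i s t)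
    (n : ℕ) (σ : ∀ i, S i) : 0 ≤ pathWeight P π n σ :=
  mul_nonneg (hπ _) (chainProd_nonneg P hP 1 n σ)

lemma chainProd_update_piecewise {a b c : ℕ} (hab : a ≤ b) (hbc : b ≤ c) (σ τ : ∀ i, S i)
    (t : S a) :
    chainProd P a c (Function.update ((Ioc a b).piecewise σ τ) a t) =
      chainProd P a b (Function.update σ a t) *
        chainProd P b c (Function.update τ b (Function.update σ a t b)) := by
  rw [← chainProd_mul P hab hbc]
  congr 1 <;> apply chainProd_congr <;> intro i hi hi'
  · exact update_piecewise_Ioc_apply_of_le σ τ t hi hi'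
  · exact update_piecewise_Ioc_apply_of_ge σ τ t hab hi

lemma pathWeight_piecewise {a n : ℕ} (ha : 1 ≤ a) (han : a ≤ n) (π : S 1 → ℝ)
    (σ τ : ∀ i, S i) :
    pathWeight P π n ((Icc 1 a).piecewise σ τ) =
      pathWeight P π a σ * chainProd P a n (Function.update τ a (σ a)) := by
  rw [pathWeight, pathWeight, ← chainProd_mul P ha han, mul_assoc,
    Finset.piecewise_eq_of_mem _ _ _ (by simp [ha])]
  congr 2 <;> apply chainProd_congr <;> intro i hi hi'
  · exact Finset.piecewise_eq_of_mem _ _ _ (by simp [hi, hi'])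
  · exact piecewise_Icc_apply_of_le σ τ ha hi

end Chain

section Paths

variable {S : ℕ → Type} [∀ i, Fintype (S i)] [∀ i, Nonempty (S i)]

noncomputable def basePath : ∀ i, S i := fun i => Classical.arbitrary (S i)

/-- Paths indexed by `I`, encoded as total functions that equal `basePath` off `I`. -/
noncomputable def pathsOn (I : Finset ℕ) : Finset (∀ i, S i) :=
  (I.pi fun _ => univ).image fun f i => if h : i ∈ I then f i h else basePath i

lemma mem_pathsOn {I : Finset ℕ} {σ : ∀ i, S i} :
    σ ∈ pathsOn I ↔ ∀ i ∉ I, σ i = basePath i := by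
  constructor
  · rintro h i hi
    obtain ⟨f, -, rfl⟩ := Finset.mem_image.mp h
    simp [hi]
  · intro h
    refine Finset.mem_image.mpr ⟨fun i _ => σ i, by simp, funext fun i => ?_⟩
    by_cases hi : i ∈ I <;> simp [hi, h]

lemma piecewise_mem_pathsOn (I : Finset ℕ) (x : ∀ i, S i) :
    I.piecewise x basePath ∈ pathsOn I :=
  mem_pathsOn.mpr fun _ hi => Finset.piecewise_eq_of_notMem _ _ _ hi

lemma pathsOn_empty : (pathsOn ∅ : Finset (∀ i, S i)) = {basePath} := by
  ext σ
  simp only [mem_pathsOn, Finset.notMem_empty, not_false_eq_true, forall_const,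
    Finset.mem_singleton]
  exact funext_iff.symm

lemma sum_pathsOn_union {M : Type*} [AddCommMonoid M] {I J : Finset ℕ} (hIJ : Disjoint I J)
    (F : (∀ i, S i) → M) :
    ∑ σ ∈ pathsOn (I ∪ J), F σ = ∑ σ ∈ pathsOn I, ∑ τ ∈ pathsOn J, F (I.piecewise σ τ) := by
  rw [← Finset.sum_product']
  refine Finset.sum_nbij' (fun σ => (I.piecewise σ basePath, J.piecewise σ basePath))
    (fun p => I.piecewise p.1 p.2) (fun σ _ => ?_) (fun p hp => ?_) (fun σ hσ => ?_)
    (fun p hp => ?_) (fun σ hσ => ?_)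
  · exact Finset.mem_product.mpr ⟨piecewise_mem_pathsOn _ _, piecewise_mem_pathsOn _ _⟩
  · obtain ⟨h1, h2⟩ := Finset.mem_product.mp hp
    refine mem_pathsOn.mpr fun i hi => ?_
    rw [Finset.mem_union, not_or] at hi
    rw [Finset.piecewise_eq_of_notMem _ _ _ hi.1, mem_pathsOn.mp h2 i hi.2]
  · have hσ' := mem_pathsOn.mp hσ
    funext i
    by_cases hi : i ∈ I
    · simp [hi]
    · by_cases hj : i ∈ J
      · simp [hi, hj]
      · simp [hi, hj, hσ' i (by simp [hi, hj])]
  · obtain ⟨h1, h2⟩ := Finset.mem_product.mp hp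
    refine Prod.ext (funext fun i => ?_) (funext fun i => ?_)
    · by_cases hi : i ∈ I
      · simp [hi]
      · simp [hi, mem_pathsOn.mp h1 i hi]
    · by_cases hj : i ∈ J
      · simp [hj, Finset.disjoint_right.mp hIJ hj]
      · simp [hj, mem_pathsOn.mp h2 i hj]
  · congr 1
    funext i
    by_cases hi : i ∈ I
    · simp [hi]
    · by_cases hj : i ∈ J
      · simp [hi, hj]
      · simp [hi, hj, mem_pathsOn.mp hσ i (by simp [hi, hj])]

lemma sum_pathsOn_singleton {M : Type*} [AddCommMonoid M] (c : ℕ) (F : (∀ i, S i) → M) :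
    ∑ σ ∈ pathsOn {c}, F σ = ∑ s : S c, F (Function.update basePath c s) := by
  have hupd : ∀ σ ∈ (pathsOn {c} : Finset (∀ i, S i)), Function.update basePath c (σ c) = σ := by
    intro σ hσ
    funext i
    by_cases hi : i = c
    · subst hi; simp
    · simp [Function.update_of_ne hi, mem_pathsOn.mp hσ i (by simpa using hi)]
  refine Finset.sum_nbij' (fun σ => σ c) (Function.update basePath c) (fun _ _ => mem_univ _)
    (fun s _ => mem_pathsOn.mpr fun i hi => ?_) (fun σ hσ => hupd σ hσ) (fun s _ => by simp)
    (fun σ hσ => by rw [hupd σ hσ])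
  exact Function.update_of_ne (by simpa using hi) _ _

section Markov

lemma sum_matProd_eq_one {S : ℕ → Type} [∀ i, Fintype (S i)] {P : (i : ℕ) → S i → S (i + 1) → ℝ}
    (hP : ∀ i, IsStochastic (P i)) (j k : ℕ) (t : S j) :
    ∑ u, matProd P j k t u = 1 := by
  induction k with
  | zero => simp [matProd]
  | succ k ih =>
    simp only [matProd]
    rw [Finset.sum_comm]
    simp only [← Finset.mul_sum]
    calc ∑ s, matProd P j k t s * ∑ u : S (j + k + 1), P (j + k) s u
        = ∑ s, matProd P j k t s := by simp only [(hP (j + k)).2, mul_one]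
      _ = 1 := ih

variable {S : ℕ → Type} [∀ i, Fintype (S i)] [∀ i, Nonempty (S i)]
  (P : (i : ℕ) → S i → S (i + 1) → ℝ)

lemma sum_chainProd_update_mul (a m : ℕ) (t : S a) (v : S (a + m) → ℝ) :
    ∑ σ ∈ pathsOn (Ioc a (a + m)),
        chainProd P a (a + m) (Function.update σ a t) * v (Function.update σ a t (a + m)) =
      ∑ u, matProd P a m t u * v u := by
  induction m with
  | zero =>
    simp [pathsOn_empty, chainProd, matProd]
  | succ m ih =>
    have hsplit : Ioc a (a + (m + 1)) = Ioc a (a + m) ∪ Ioc (a + m) (a + m + 1) :=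
      (Finset.Ioc_union_Ioc_eq_Ioc (by omega) (by omega)).symm
    rw [hsplit, sum_pathsOn_union (Finset.Ioc_disjoint_Ioc_of_le le_rfl), Nat.Ioc_succ_singleton]
    have hterm : ∀ σ, ∀ s : S (a + m + 1),
        chainProd P a (a + (m + 1)) (Function.update ((Ioc a (a + m)).piecewise σ
            (Function.update basePath (a + m + 1) s)) a t) *
          v (Function.update ((Ioc a (a + m)).piecewise σ
            (Function.update basePath (a + m + 1) s)) a t (a + (m + 1))) =
        chainProd P a (a + m) (Function.update σ a t) *
          (P (a + m) (Function.update σ a t (a + m)) s * v s) := by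
      intro σ s
      rw [chainProd_update_piecewise P (by omega) (by omega),
        update_piecewise_Ioc_apply_of_ge σ _ t (by omega) (by omega),
        Function.update_of_ne (show a + (m + 1) ≠ a + m by omega), mul_assoc]
      have hv : v (Function.update basePath (a + m + 1) s (a + (m + 1))) = v s :=
        congrArg v (Function.update_self _ _ _)
      erw [chainProd_succ_self, hv]
      simp
    simp only [sum_pathsOn_singleton, hterm, ← Finset.mul_sum]
    rw [ih fun u => ∑ s, P (a + m) u s * v s]
    simp only [matProd, Finset.mul_sum, Finset.sum_mul, mul_assoc]
    exact Finset.sum_comm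

/-- The conditional mean of `α` given the state `u` at time `a`, for the chain run up to
time `a + m`. -/
noncomputable def forwardMean (a m : ℕ) (α : (∀ i, S i) → ℝ) (u : S a) : ℝ :=
  ∑ σ ∈ pathsOn (Ioc a (a + m)),
    chainProd P a (a + m) (Function.update σ a u) * α (Function.update σ a u)

lemma sum_mul_mul_pathWeight {j : ℕ} (hj : 1 ≤ j) (k m : ℕ) (π : S 1 → ℝ)
    {α β : (∀ i, S i) → ℝ}
    (hα : ∀ σ τ : ∀ i, S i, (∀ i, j + k ≤ i → i ≤ j + k + m → σ i = τ i) → α σ = α τ)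
    (hβ : ∀ σ τ : ∀ i, S i, (∀ i, 1 ≤ i → i ≤ j → σ i = τ i) → β σ = β τ) :
    ∑ σ ∈ pathsOn (Icc 1 (j + k + m)), α σ * β σ * pathWeight P π (j + k + m) σ =
      ∑ σ ∈ pathsOn (Icc 1 j), β σ * pathWeight P π j σ *
        ∑ u, matProd P j k (σ j) u * forwardMean P (j + k) m α u := by
  have hsplit : Icc 1 (j + k + m) = Icc 1 j ∪ (Ioc j (j + k) ∪ Ioc (j + k) (j + k + m)) := by
    ext; simp only [Finset.mem_union, Finset.mem_Icc, Finset.mem_Ioc]; omega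
  rw [hsplit, sum_pathsOn_union (by simp [Finset.disjoint_left]; omega)]
  refine Finset.sum_congr rfl fun σ _ => ?_
  rw [sum_pathsOn_union (Finset.Ioc_disjoint_Ioc_of_le le_rfl)]
  have hterm : ∀ τ ρ : ∀ i, S i,
      let γ := (Icc 1 j).piecewise σ ((Ioc j (j + k)).piecewise τ ρ)
      let x := Function.update τ j (σ j) (j + k)
      α γ * β γ * pathWeight P π (j + k + m) γ =
        β σ * pathWeight P π j σ * (chainProd P j (j + k) (Function.update τ j (σ j)) *
          (chainProd P (j + k) (j + k + m) (Function.update ρ (j + k) x) *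
            α (Function.update ρ (j + k) x))) := by
    intro τ ρ γ x
    have hγ : ∀ i, j ≤ i → γ i = Function.update ((Ioc j (j + k)).piecewise τ ρ) j (σ j) i :=
      fun i hi => piecewise_Icc_apply_of_le σ _ hj hi
    have hαγ : α γ = α (Function.update ρ (j + k) x) := hα _ _ fun i hi _ => by
      rw [hγ i (by omega), update_piecewise_Ioc_apply_of_ge τ ρ _ (by omega) hi]
    have hβγ : β γ = β σ := hβ _ _ fun i hi hi' =>
      Finset.piecewise_eq_of_mem _ _ _ (by simp [hi, hi'])
    rw [hαγ, hβγ, pathWeight_piecewise P hj (by omega),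
      chainProd_update_piecewise P (by omega) (by omega)]
    ring
  simp only [hterm, ← Finset.mul_sum]
  congr 1
  exact sum_chainProd_update_mul P j k (σ j) (forwardMean P (j + k) m α)

variable {P}

lemma sum_chainProd_update (hP : ∀ i, IsStochastic (P i)) (a m : ℕ) (t : S a) :
    ∑ σ ∈ pathsOn (Ioc a (a + m)), chainProd P a (a + m) (Function.update σ a t) = 1 := by
  simpa [sum_matProd_eq_one hP] using sum_chainProd_update_mul P a m t 1

lemma sum_pathWeight (hP : ∀ i, IsStochastic (P i)) {π : S 1 → ℝ} (hπ : ∑ s, π s = 1)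
    {j : ℕ} (hj : 1 ≤ j) :
    ∑ σ ∈ pathsOn (Icc 1 j), pathWeight P π j σ = 1 := by
  obtain ⟨m, rfl⟩ : ∃ m, j = 1 + m := ⟨j - 1, by omega⟩
  have hsplit : Icc 1 (1 + m) = Icc 1 1 ∪ Ioc 1 (1 + m) := by
    ext; simp only [Finset.mem_union, Finset.mem_Icc, Finset.mem_Ioc]; omega
  rw [hsplit, sum_pathsOn_union (by simp)]
  simp only [pathWeight_piecewise P le_rfl hj, ← Finset.mul_sum, sum_chainProd_update hP,
    mul_one]
  rw [Finset.Icc_self, sum_pathsOn_singleton]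
  simpa [pathWeight, chainProd] using hπ

lemma forwardMean_nonneg (hP : ∀ i s t, 0 ≤ P i s t) {α : (∀ i, S i) → ℝ}
    (hα : ∀ σ, 0 ≤ α σ) (a m : ℕ) (u : S a) : 0 ≤ forwardMean P a m α u :=
  Finset.sum_nonneg fun _ _ => mul_nonneg (chainProd_nonneg P hP _ _ _) (hα _)

lemma forwardMean_le_one (hP : ∀ i, IsStochastic (P i)) {α : (∀ i, S i) → ℝ}
    (hα : ∀ σ, α σ ≤ 1) (a m : ℕ) (u : S a) : forwardMean P a m α u ≤ 1 := by
  rw [← sum_chainProd_update hP a m u]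
  exact Finset.sum_le_sum fun _ _ =>
    mul_le_of_le_one_right (chainProd_nonneg P (fun i => (hP i).1) _ _ _) (hα _)

end Markov

section Contraction

lemma sum_mul_sub_sum_mul_le_half_sum_abs {U : Type} [Fintype U] {x y h : U → ℝ}
    (hxy : ∑ u, x u = ∑ u, y u) (h0 : ∀ u, 0 ≤ h u) (h1 : ∀ u, h u ≤ 1) :
    ∑ u, x u * h u - ∑ u, y u * h u ≤ 1 / 2 * ∑ u, |x u - y u| := by
  have hpoint : ∀ u, x u * h u - y u * h u ≤ ((x u - y u) + |x u - y u|) / 2 := by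
    intro u
    rcases le_total 0 (x u - y u) with hd | hd
    · rw [abs_of_nonneg hd]; nlinarith [h1 u]
    · rw [abs_of_nonpos hd]; nlinarith [h0 u]
  calc ∑ u, x u * h u - ∑ u, y u * h u ≤ ∑ u, ((x u - y u) + |x u - y u|) / 2 := by
        rw [← Finset.sum_sub_distrib]; exact Finset.sum_le_sum fun u _ => hpoint u
    _ = 1 / 2 * ∑ u, |x u - y u| := by
        rw [← Finset.sum_div, Finset.sum_add_distrib, Finset.sum_sub_distrib, hxy]; ring

lemma half_sum_abs_le_contractionCoeff {T U : Type} [Fintype T] [Fintype U] (Q : T → U → ℝ)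
    (t₁ t₂ : T) : 1 / 2 * ∑ u, |Q t₁ u - Q t₂ u| ≤ contractionCoeff Q := by
  refine mul_le_mul_of_nonneg_left ?_ (by norm_num)
  exact (le_ciSup (Set.finite_range _).bddAbove t₂).trans
    (le_ciSup (f := fun t => ⨆ t' : T, ∑ u, |Q t u - Q t' u|) (Set.finite_range _).bddAbove t₁)

lemma sum_mul_sub_sum_mul_le_contractionCoeff {T U : Type} [Fintype T] [Fintype U]
    {Q : T → U → ℝ} (hQ : ∀ t, ∑ u, Q t u = 1) {h : U → ℝ} (h0 : ∀ u, 0 ≤ h u)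
    (h1 : ∀ u, h u ≤ 1) (t₁ t₂ : T) :
    ∑ u, Q t₁ u * h u - ∑ u, Q t₂ u * h u ≤ contractionCoeff Q :=
  (sum_mul_sub_sum_mul_le_half_sum_abs (by rw [hQ, hQ]) h0 h1).trans
    (half_sum_abs_le_contractionCoeff Q t₁ t₂)

lemma sum_mul_sub_sum_mul_le_of_sub_le {ι κ : Type*} {s : Finset ι} {t : Finset κ}
    {a : ι → ℝ} {b : κ → ℝ} {f : ι → ℝ} {g : κ → ℝ} {c : ℝ}
    (ha : ∀ x ∈ s, 0 ≤ a x) (ha1 : ∑ x ∈ s, a x = 1)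
    (hb : ∀ y ∈ t, 0 ≤ b y) (hb1 : ∑ y ∈ t, b y = 1)
    (hfg : ∀ x ∈ s, ∀ y ∈ t, f x - g y ≤ c) :
    ∑ x ∈ s, a x * f x - ∑ y ∈ t, b y * g y ≤ c :=
  calc ∑ x ∈ s, a x * f x - ∑ y ∈ t, b y * g y
      = ∑ x ∈ s, ∑ y ∈ t, a x * b y * (f x - g y) := by
        have hexpand : ∀ x y, a x * b y * (f x - g y) = a x * f x * b y - a x * (b y * g y) :=
          fun _ _ => by ring
        simp only [hexpand, Finset.sum_sub_distrib, ← Finset.mul_sum, ← Finset.sum_mul, hb1, ha1,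
          mul_one, one_mul]
    _ ≤ ∑ x ∈ s, ∑ y ∈ t, a x * b y * c :=
        Finset.sum_le_sum fun x hx => Finset.sum_le_sum fun y hy =>
          mul_le_mul_of_nonneg_left (hfg x hx y hy) (mul_nonneg (ha x hx) (hb y hy))
    _ = c := by simp only [← Finset.sum_mul, ← Finset.mul_sum, hb1, ha1, mul_one, one_mul]

lemma abs_sum_mul_div_sub_sum_mul_le {ι : Type*} {s : Finset ι} {b w g : ι → ℝ} {c : ℝ}
    (hb : ∀ x ∈ s, 0 ≤ b x) (hbpos : 0 < ∑ x ∈ s, b x) (hw : ∀ x ∈ s, 0 ≤ w x)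
    (hw1 : ∑ x ∈ s, w x = 1) (hg : ∀ x ∈ s, ∀ y ∈ s, g x - g y ≤ c) :
    |(∑ x ∈ s, b x * g x) / ∑ x ∈ s, b x - ∑ x ∈ s, w x * g x| ≤ c := by
  set B := ∑ x ∈ s, b x
  have hnorm : ∑ x ∈ s, b x / B = 1 := by rw [← Finset.sum_div, div_self hbpos.ne']
  have hb' : ∀ x ∈ s, 0 ≤ b x / B := fun x hx => div_nonneg (hb x hx) hbpos.le
  have hmean : (∑ x ∈ s, b x * g x) / B = ∑ x ∈ s, b x / B * g x := by
    rw [Finset.sum_div]; exact Finset.sum_congr rfl fun x _ => by ring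
  rw [hmean, abs_sub_le_iff]
  exact ⟨sum_mul_sub_sum_mul_le_of_sub_le hb' hnorm hw hw1 hg,
    sum_mul_sub_sum_mul_le_of_sub_le hw hw1 hb' hnorm hg⟩

end Contraction

section Mixing

variable {S : ℕ → Type} [∀ i, Fintype (S i)] [∀ i, Nonempty (S i)]
  {P : (i : ℕ) → S i → S (i + 1) → ℝ} {π : S 1 → ℝ}

theorem abs_sum_pathWeight_div_sub_le_contractionCoeff (hP : ∀ i, IsStochastic (P i))
    (hπ0 : ∀ s, 0 ≤ π s) (hπ1 : ∑ s, π s = 1) {j : ℕ} (hj : 1 ≤ j) (k m : ℕ)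
    {α β : (∀ i, S i) → ℝ}
    (hα : ∀ σ τ : ∀ i, S i, (∀ i, j + k ≤ i → i ≤ j + k + m → σ i = τ i) → α σ = α τ)
    (hα0 : ∀ σ, 0 ≤ α σ) (hα1 : ∀ σ, α σ ≤ 1)
    (hβ : ∀ σ τ : ∀ i, S i, (∀ i, 1 ≤ i → i ≤ j → σ i = τ i) → β σ = β τ)
    (hβ0 : ∀ σ, 0 ≤ β σ)
    (hpos : 0 < ∑ σ ∈ pathsOn (Icc 1 (j + k + m)), β σ * pathWeight P π (j + k + m) σ) :
    |(∑ σ ∈ pathsOn (Icc 1 (j + k + m)), α σ * β σ * pathWeight P π (j + k + m) σ) /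
        (∑ σ ∈ pathsOn (Icc 1 (j + k + m)), β σ * pathWeight P π (j + k + m) σ) -
      ∑ σ ∈ pathsOn (Icc 1 (j + k + m)), α σ * pathWeight P π (j + k + m) σ| ≤
      contractionCoeff (matProd P j k) := by
  have hone : ∀ t : S j, ∑ u, matProd P j k t u * forwardMean P (j + k) m (fun _ => 1) u = 1 :=
    fun t => by simp [forwardMean, sum_chainProd_update hP, sum_matProd_eq_one hP]
  have hdecβ := sum_mul_mul_pathWeight P hj k m π (α := fun _ => 1) (fun _ _ _ => rfl) hβ
  have hdecα := sum_mul_mul_pathWeight P hj k m π hα (β := fun _ => 1) (fun _ _ _ => rfl)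
  simp only [one_mul, mul_one, hone] at hdecβ hdecα
  rw [sum_mul_mul_pathWeight P hj k m π hα hβ, hdecβ, hdecα]
  have hw0 := pathWeight_nonneg P hπ0 fun i => (hP i).1
  refine abs_sum_mul_div_sub_sum_mul_le (fun σ _ => mul_nonneg (hβ0 σ) (hw0 j σ))
    (hdecβ ▸ hpos) (fun σ _ => hw0 j σ) (sum_pathWeight hP hπ1 hj) fun σ _ τ _ => ?_
  exact sum_mul_sub_sum_mul_le_contractionCoeff (sum_matProd_eq_one hP j k)
    (forwardMean_nonneg (fun i => (hP i).1) hα0 _ m) (forwardMean_le_one hP hα1 _ m) _ _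

end Mixing

section Cylinders

variable {Ω : Type*} {S : ℕ → Type*}

lemma mem_iff_of_measurableSet_iSup_comap (X : ∀ i, Ω → S i) {I : Set ℕ} {W : Set Ω}
    (hW : MeasurableSet[⨆ i ∈ I, MeasurableSpace.comap (X i) ⊤] W) {ω ω' : Ω}
    (h : ∀ i ∈ I, X i ω = X i ω') : ω ∈ W ↔ ω' ∈ W := by
  let m : MeasurableSpace Ω :=
    { MeasurableSet' := fun W => ∀ ω ω', (∀ i ∈ I, X i ω = X i ω') → (ω ∈ W ↔ ω' ∈ W)
      measurableSet_empty := fun _ _ _ => Iff.rfl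
      measurableSet_compl := fun _ hW ω ω' h => not_congr (hW ω ω' h)
      measurableSet_iUnion := fun _ hf ω ω' h => by
        simp only [Set.mem_iUnion]
        exact exists_congr fun i => hf i ω ω' h }
  have hle : ⨆ i ∈ I, MeasurableSpace.comap (X i) ⊤ ≤ m := by
    refine iSup₂_le fun i hi => ?_
    rintro _ ⟨E, -, rfl⟩ ω ω' h
    rw [Set.mem_preimage, Set.mem_preimage, h i hi]
  exact hle W hW ω ω' h

def pathTrace (X : ∀ i, Ω → S i) (I : Set ℕ) (W : Set Ω) : Set (∀ i, S i) :=
  {σ | ∃ ω ∈ W, ∀ i ∈ I, X i ω = σ i}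

lemma mem_iff_mem_pathTrace (X : ∀ i, Ω → S i) {I : Set ℕ} {W : Set Ω}
    (hW : MeasurableSet[⨆ i ∈ I, MeasurableSpace.comap (X i) ⊤] W) {ω : Ω} {σ : ∀ i, S i}
    (h : ∀ i ∈ I, X i ω = σ i) : ω ∈ W ↔ σ ∈ pathTrace X I W :=
  ⟨fun hω => ⟨ω, hω, h⟩, fun ⟨_, hω', h'⟩ =>
    (mem_iff_of_measurableSet_iSup_comap X hW fun i hi => (h i hi).trans (h' i hi).symm).mpr hω'⟩

lemma indicator_pathTrace_congr (X : ∀ i, Ω → S i) (I : Set ℕ) (W : Set Ω) {σ τ : ∀ i, S i}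
    (h : ∀ i ∈ I, σ i = τ i) :
    (pathTrace X I W).indicator (1 : (∀ i, S i) → ℝ) σ = (pathTrace X I W).indicator 1 τ := by
  have hmem : σ ∈ pathTrace X I W ↔ τ ∈ pathTrace X I W :=
    exists_congr fun _ => and_congr_right fun _ => forall₂_congr fun i hi => by rw [h i hi]
  simp only [Set.indicator_apply, hmem, Pi.one_apply]

/-- Subadditivity of `μ` on `W` and on `Wᶜ` pins down `μ W`, because the masses of the cells
sum to one. -/
lemma toReal_measure_eq_sum_indicator [MeasurableSpace Ω] (μ : Measure Ω)
    [IsProbabilityMeasure μ] {ι : Type*} (F : Finset ι) (C : ι → Set Ω)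
    (hcover : ∀ ω, ∃ σ ∈ F, ω ∈ C σ) (hmass : ∑ σ ∈ F, μ (C σ) = 1) {W : Set Ω} {T : Set ι}
    (hWT : ∀ σ ∈ F, ∀ ω ∈ C σ, ω ∈ W ↔ σ ∈ T) :
    (μ W).toReal = ∑ σ ∈ F, T.indicator 1 σ * (μ (C σ)).toReal := by
  have hsub : ∀ (V : Set Ω) (p : ι → Prop) [DecidablePred p],
      (∀ σ ∈ F, ∀ ω ∈ C σ, ω ∈ V → p σ) → μ V ≤ ∑ σ ∈ F with p σ, μ (C σ) := by
    intro V p _ hV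
    refine (measure_mono fun ω hω => ?_).trans (measure_biUnion_finset_le _ C)
    obtain ⟨σ, hσ, hωσ⟩ := hcover ω
    exact Set.mem_biUnion (Finset.mem_filter.mpr ⟨hσ, hV σ hσ ω hωσ hω⟩) hωσ
  have hW := hsub W (· ∈ T) fun σ hσ ω hω => (hWT σ hσ ω hω).mp
  have hWc := hsub Wᶜ (· ∉ T) fun σ hσ ω hω => mt (hWT σ hσ ω hω).mpr
  have hfin : ∑ σ ∈ F with σ ∉ T, μ (C σ) ≠ ⊤ :=
    ne_top_of_le_ne_top ENNReal.one_ne_top (hmass ▸ Finset.sum_le_sum_of_subset (by simp))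
  have hge : ∑ σ ∈ F with σ ∈ T, μ (C σ) ≤ μ W := by
    refine ENNReal.le_of_add_le_add_right hfin ?_
    calc _ = μ Set.univ := by rw [Finset.sum_filter_add_sum_filter_not, hmass, measure_univ]
      _ ≤ μ W + μ Wᶜ := by rw [← Set.union_compl_self W]; exact measure_union_le W Wᶜ
      _ ≤ _ := add_le_add_right hWc _
  rw [le_antisymm hW hge, ENNReal.toReal_sum fun _ _ => measure_ne_top μ _, Finset.sum_filter]
  refine Finset.sum_congr rfl fun σ _ => ?_
  by_cases hσ : σ ∈ T <;> simp [hσ]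

end Cylinders

lemma toReal_measure_eq_sum_pathWeight {Ω : Type*} [MeasurableSpace Ω] (μ : Measure Ω)
    [IsProbabilityMeasure μ] {S : ℕ → Type} [∀ i, Fintype (S i)] [∀ i, Nonempty (S i)]
    (X : ∀ i, Ω → S i) {P : (i : ℕ) → S i → S (i + 1) → ℝ} (hP : ∀ i, IsStochastic (P i))
    {π : S 1 → ℝ} (hπ : ∑ s, π s = 1) {N : ℕ} (hN : 1 ≤ N)
    (hlaw : ∀ σ : ∀ i, S i,
      (μ {ω | ∀ i ∈ Icc 1 N, X i ω = σ i}).toReal = pathWeight P π N σ)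
    {W : Set Ω} {T : Set (∀ i, S i)}
    (hWT : ∀ σ ω, (∀ i ∈ Icc 1 N, X i ω = σ i) → (ω ∈ W ↔ σ ∈ T)) :
    (μ W).toReal = ∑ σ ∈ pathsOn (Icc 1 N), T.indicator 1 σ * pathWeight P π N σ := by
  have hmass : ∑ σ ∈ pathsOn (Icc 1 N), μ {ω | ∀ i ∈ Icc 1 N, X i ω = σ i} = 1 := by
    rw [← ENNReal.toReal_eq_one_iff, ENNReal.toReal_sum fun _ _ => measure_ne_top μ _]
    simpa only [hlaw] using sum_pathWeight hP hπ hN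
  have hcover : ∀ ω, ∃ σ ∈ pathsOn (Icc 1 N), ∀ i ∈ Icc 1 N, X i ω = σ i := fun ω =>
    ⟨_, piecewise_mem_pathsOn _ fun i => X i ω,
      fun i hi => (Finset.piecewise_eq_of_mem _ (fun i => X i ω) basePath hi).symm⟩
  simpa only [hlaw] using
    toReal_measure_eq_sum_indicator μ _ (fun σ : ∀ i, S i => {ω | ∀ i ∈ Icc 1 N, X i ω = σ i})
      hcover hmass fun σ _ ω hω => hWT σ ω hω

theorem stmt19_general {Ω : Type} [MeasurableSpace Ω] (μ : Measure Ω) [IsProbabilityMeasure μ]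
    (n : ℕ) (S : ℕ → Type) [∀ i, Fintype (S i)] [∀ i, Nonempty (S i)]
    (X : (i : ℕ) → Ω → S i) (π : S 1 → ℝ)
    (P : (i : ℕ) → S i → S (i + 1) → ℝ)
    (hπ : (∀ s, 0 ≤ π s) ∧ ∑ s : S 1, π s = 1)
    (hP : ∀ i, IsStochastic (P i))
    (hlaw : ∀ s : (i : ℕ) → S i,
      (μ {ω | ∀ i ∈ Finset.Icc 1 n, X i ω = s i}).toReal =
        π (s 1) * ∏ i ∈ Finset.Ico 1 n, P i (s i) (s (i + 1)))
    (j k : ℕ) (hj : 1 ≤ j) (hjk : j + k ≤ n)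
    (A B : Set Ω)
    (hA : MeasurableSet[⨆ i ∈ {i : ℕ | j + k ≤ i ∧ i ≤ n},
      MeasurableSpace.comap (X i) ⊤] A)
    (hB : MeasurableSet[⨆ i ∈ {i : ℕ | 1 ≤ i ∧ i ≤ j},
      MeasurableSpace.comap (X i) ⊤] B)
    (hBpos : 0 < μ B) :
    |(μ (A ∩ B)).toReal / (μ B).toReal - (μ A).toReal| ≤
      contractionCoeff (matProd P j k) := by
  obtain ⟨m, rfl⟩ : ∃ m, n = j + k + m := ⟨n - (j + k), by omega⟩
  have hμ := fun W T => toReal_measure_eq_sum_pathWeight μ X hP hπ.2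
    (by omega : 1 ≤ j + k + m) hlaw (W := W) (T := T)
  set TA := pathTrace X {i | j + k ≤ i ∧ i ≤ j + k + m} A
  set TB := pathTrace X {i | 1 ≤ i ∧ i ≤ j} B
  have hA' : ∀ σ ω, (∀ i ∈ Icc 1 (j + k + m), X i ω = σ i) → (ω ∈ A ↔ σ ∈ TA) :=
    fun σ ω hω => mem_iff_mem_pathTrace X hA fun i ⟨hi, hi'⟩ =>
      hω i (Finset.mem_Icc.mpr ⟨by omega, hi'⟩)
  have hB' : ∀ σ ω, (∀ i ∈ Icc 1 (j + k + m), X i ω = σ i) → (ω ∈ B ↔ σ ∈ TB) :=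
    fun σ ω hω => mem_iff_mem_pathTrace X hB fun i ⟨hi, hi'⟩ =>
      hω i (Finset.mem_Icc.mpr ⟨hi, by omega⟩)
  have hμB := hμ B TB hB'
  rw [hμ (A ∩ B) (TA ∩ TB) fun σ ω hω => and_congr (hA' σ ω hω) (hB' σ ω hω),
    Set.inter_indicator_one, hμB, hμ A TA hA']
  simp only [Pi.mul_apply]
  exact abs_sum_pathWeight_div_sub_le_contractionCoeff hP hπ.1 hπ.2 hj k m
    (fun σ τ h => indicator_pathTrace_congr X _ A fun i hi => h i hi.1 hi.2)
    (Set.indicator_nonneg fun _ _ => zero_le_one) (Set.indicator_le_self' fun _ _ => zero_le_one)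
    (fun σ τ h => indicator_pathTrace_congr X _ B fun i hi => h i hi.1 hi.2)
    (Set.indicator_nonneg fun _ _ => zero_le_one)
    (hμB ▸ ENNReal.toReal_pos hBpos.ne' (measure_ne_top μ B))

/-- For a finite-state (non-homogeneous) Markov chain `X_1, …, X_n`, the uniform mixing
coefficient between the past `σ(X_i, i ≤ j)` and the future `σ(X_i, i ≥ j+k)` is bounded
by the contraction coefficient of the product `P_j·P_{j+1}·⋯·P_{j+k−1}`. -/
theorem stmt19 {Ω : Type} [MeasurableSpace Ω] (μ : Measure Ω) [IsProbabilityMeasure μ]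
    (n : ℕ) (S : ℕ → Type) [∀ i, Fintype (S i)] [∀ i, Nonempty (S i)]
    (X : (i : ℕ) → Ω → S i) (π : S 1 → ℝ)
    (P : (i : ℕ) → S i → S (i + 1) → ℝ)
    (hπ : (∀ s, 0 ≤ π s) ∧ ∑ s : S 1, π s = 1)
    (hP : ∀ i, IsStochastic (P i))
    (hlaw : ∀ s : (i : ℕ) → S i,
      (μ {ω | ∀ i ∈ Finset.Icc 1 n, X i ω = s i}).toReal =
        π (s 1) * ∏ i ∈ Finset.Ico 1 n, P i (s i) (s (i + 1)))
    (j k : ℕ) (hj : 1 ≤ j) (hk : 1 ≤ k) (hjk : j + k ≤ n)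
    (A B : Set Ω)
    (hA : MeasurableSet[⨆ i ∈ {i : ℕ | j + k ≤ i ∧ i ≤ n},
      MeasurableSpace.comap (X i) ⊤] A)
    (hB : MeasurableSet[⨆ i ∈ {i : ℕ | 1 ≤ i ∧ i ≤ j},
      MeasurableSpace.comap (X i) ⊤] B)
    (hBpos : 0 < μ B) :
    |(μ (A ∩ B)).toReal / (μ B).toReal - (μ A).toReal| ≤
      contractionCoeff (matProd P j k) :=
  stmt19_general μ n S X π P hπ hP hlaw j k hj hjk A B hA hB hBpos
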